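/- In the monoid presented by ⟨a, b ∣ (ba)^n = (ab)^n⟩ (for a fixed n ≥ 1), for every p ≥ 1 the words b·a^p·(ab)^n and (ab)^n·b·a^p represent the same element. -/
import Mathlib


namespace Stmt3
def a : FreeMonoid (Fin 2) := FreeMonoid.of 0
def b : FreeMonoid (Fin 2) := FreeMonoid.of 1

theorem stmt3 (n : ℕ) (hn : 1 ≤ n) (p : ℕ) (hp : 1 ≤ p) :
    conGen (fun x y => x = (b * a) ^ n ∧ y = (a * b) ^ n)
      (b * a ^ p * (a * b) ^ n) ((a * b) ^ n * b * a ^ p) := by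
  set r : FreeMonoid (Fin 2) → FreeMonoid (Fin 2) → Prop :=
    fun x y => x = (b * a) ^ n ∧ y = (a * b) ^ n with hr
  set c := conGen r with hc
  have hbase : c ((b * a) ^ n) ((a * b) ^ n) := ConGen.Rel.of _ _ ⟨rfl, rfl⟩
  -- semiconjugation identities in the free monoid
  have ha : a * (b * a) ^ n = (a * b) ^ n * a :=
    (SemiconjBy.pow_right (by simp [SemiconjBy, mul_assoc]) n)
  have hb : b * (a * b) ^ n = (b * a) ^ n * b :=
    (SemiconjBy.pow_right (by simp [SemiconjBy, mul_assoc]) n)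
  -- (a*b)^n commutes with a^p modulo c
  have hcomm : ∀ q : ℕ, c ((a * b) ^ n * a ^ q) (a ^ q * (a * b) ^ n) := by
    intro q
    induction q with
    | zero => simpa using c.refl _
    | succ q ih =>
      have h1 : (a * b) ^ n * a ^ (q + 1) = a * ((b * a) ^ n * a ^ q) := by
        rw [pow_succ' a, ← mul_assoc, ← ha, mul_assoc]
      have h2 : c (a * ((b * a) ^ n * a ^ q)) (a * ((a * b) ^ n * a ^ q)) :=
        c.mul (c.refl a) (c.mul hbase (c.refl _))
      have h3 : c (a * ((a * b) ^ n * a ^ q)) (a * (a ^ q * (a * b) ^ n)) :=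
        c.mul (c.refl a) ih
      have h4 : a * (a ^ q * (a * b) ^ n) = a ^ (q + 1) * (a * b) ^ n := by
        rw [← mul_assoc, ← pow_succ']
      rw [h1, ← h4]
      exact h2.trans h3
  have step1 : c (b * a ^ p * (a * b) ^ n) (b * ((a * b) ^ n * a ^ p)) := by
    have := c.mul (c.refl b) (c.symm (hcomm p))
    rwa [← mul_assoc] at this
  have h5 : b * ((a * b) ^ n * a ^ p) = (b * a) ^ n * b * a ^ p := by
    rw [← mul_assoc, hb]
  have step2 : c ((b * a) ^ n * b * a ^ p) ((a * b) ^ n * b * a ^ p) :=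
    c.mul (c.mul hbase (c.refl b)) (c.refl _)
  exact step1.trans (h5 ▸ step2)
end Stmt3
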